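/- Let g be holomorphic and bounded on Π₊. If the operator I_g f(z) = ∫_{z₀}^{z} f'(ζ) g(ζ) dζ from H²(Π₊) to B_∞(Π₊) is compact, then lim_{r→0} sup_{Im z < r} |g(z)|/(Im z)^{1/2} = 0. -/

import Mathlib

/-!
If the conclusion fails, there are points `w_n` with `Im w_n → 0` and `|g(w_n)| ≥ ε (Im w_n)^{1/2}`.
The normalized kernels `f_w(z) = (Im w)^{3/2} / (√π (z - w̄)²)` lie in the unit ball of `H²`: on the
line `Im z = y` their squared modulus is dominated by `(Im w / (y + Im w))³` times a Cauchy density.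
They tend to `0` locally uniformly as `Im w → 0`, so compactness forces `‖I_g f_{w_n}‖ → 0`.
On the other hand `(I_g f)' = f' g` (differentiate the segment integral under the integral sign),
and evaluating the Bloch seminorm at `z = w` gives
`‖I_g f_w‖ ≥ |g(w)| / (4 √π (Im w)^{1/2}) ≥ ε / (4 √π)`.
-/

open Complex MeasureTheory Filter

noncomputable section

/-- The upper half-plane. -/
def UH : Set ℂ := {z : ℂ | 0 < z.im}

/-- The integral means on horizontal lines. -/
def hardySq (f : ℂ → ℂ) (y : ℝ) : ℝ := ∫ x : ℝ, ‖f (x + y * Complex.I)‖ ^ 2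

/-- Membership in the Hardy space H²(Π₊). -/
def MemH2 (f : ℂ → ℂ) : Prop :=
  DifferentiableOn ℂ f UH ∧ BddAbove (Set.range fun y : Set.Ioi (0:ℝ) => hardySq f y)

/-- The H² norm. -/
def hardyNorm (f : ℂ → ℂ) : ℝ := Real.sqrt (⨆ y : Set.Ioi (0:ℝ), hardySq f y)

/-- The Bloch seminorm B(f). -/
def blochSemi (f : ℂ → ℂ) : ℝ := ⨆ z : UH, (z : ℂ).im * ‖deriv f (z : ℂ)‖

/-- The Bloch norm ‖f‖ = |f(i)| + B(f). -/
def blochNorm (f : ℂ → ℂ) : ℝ := ‖f Complex.I‖ + blochSemi f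

/-- J_g f(z) = ∫_{z₀}^z f ζ * g' ζ dζ, along the segment (Π₊ is convex). -/
def Jg (g f : ℂ → ℂ) (z₀ z : ℂ) : ℂ :=
  ∫ t in (0:ℝ)..(1:ℝ), f (z₀ + t • (z - z₀)) * deriv g (z₀ + t • (z - z₀)) * (z - z₀)

/-- I_g f(z) = ∫_{z₀}^z f' ζ * g ζ dζ, along the segment. -/
def Ig (g f : ℂ → ℂ) (z₀ z : ℂ) : ℂ :=
  ∫ t in (0:ℝ)..(1:ℝ), deriv f (z₀ + t • (z - z₀)) * g (z₀ + t • (z - z₀)) * (z - z₀)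

/-- The test functions f_w. -/
def fw (w : ℂ) : ℂ → ℂ := fun z =>
  ((w.im ^ ((3:ℝ)/2) : ℝ) : ℂ) / ((Real.sqrt Real.pi : ℂ) * (z - (starRingEnd ℂ) w) ^ 2)

end

open Metric Set
open scoped ComplexConjugate Real

noncomputable def segmentPrimitive (h : ℂ → ℂ) (z₀ w : ℂ) : ℂ :=
  ∫ t in (0:ℝ)..1, h (z₀ + t • (w - z₀)) * (w - z₀)

section SegmentPrimitive

variable {U : Set ℂ} {h : ℂ → ℂ} {z₀ z : ℂ}

noncomputable def segmentIntegrandDeriv (h : ℂ → ℂ) (z₀ w : ℂ) (t : ℝ) : ℂ :=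
  t • (deriv h (z₀ + t • (w - z₀)) * (w - z₀)) + h (z₀ + t • (w - z₀))

lemma hasDerivAt_segmentIntegrand (hh : DifferentiableOn ℂ h U) (hU : IsOpen U) {t : ℝ} {w : ℂ}
    (hw : z₀ + t • (w - z₀) ∈ U) :
    HasDerivAt (fun w => h (z₀ + t • (w - z₀)) * (w - z₀))
      (segmentIntegrandDeriv h z₀ w t) w := by
  have hh' := (hh.differentiableAt (hU.mem_nhds hw)).hasDerivAt
  have hline : HasDerivAt (fun w : ℂ => z₀ + t • (w - z₀)) (t • 1) w :=
    (((hasDerivAt_id w).sub_const z₀).const_smul t).const_add z₀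
  refine ((hh'.comp w hline).mul ((hasDerivAt_id w).sub_const z₀)).congr_deriv ?_
  simp only [segmentIntegrandDeriv, Complex.real_smul, Function.comp_apply, id_eq]
  ring

lemma continuousOn_segmentIntegrandDeriv (hh : DifferentiableOn ℂ h U) (hU : IsOpen U) :
    ContinuousOn (fun p : ℂ × ℝ => segmentIntegrandDeriv h z₀ p.1 p.2)
      {p | z₀ + p.2 • (p.1 - z₀) ∈ U} := by
  set S : Set (ℂ × ℝ) := {p | z₀ + p.2 • (p.1 - z₀) ∈ U}
  have hpath : ContinuousOn (fun p : ℂ × ℝ => z₀ + p.2 • (p.1 - z₀)) S :=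
    (continuous_const.add (continuous_snd.smul (continuous_fst.sub continuous_const))).continuousOn
  have hd : ContinuousOn (fun p : ℂ × ℝ => deriv h (z₀ + p.2 • (p.1 - z₀))) S :=
    (hh.analyticOnNhd hU).deriv.continuousOn.comp hpath fun _ hp => hp
  have hv : ContinuousOn (fun p : ℂ × ℝ => h (z₀ + p.2 • (p.1 - z₀))) S :=
    hh.continuousOn.comp hpath fun _ hp => hp
  have hs : ContinuousOn (fun p : ℂ × ℝ => p.1 - z₀) S :=
    (continuous_fst.sub continuous_const).continuousOn
  exact (continuousOn_snd.smul (hd.mul hs)).add hv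

lemma integral_segmentIntegrandDeriv (hh : DifferentiableOn ℂ h U) (hU : IsOpen U)
    (hUc : Convex ℝ U) (hz₀ : z₀ ∈ U) (hz : z ∈ U) :
    ∫ t in (0:ℝ)..1, segmentIntegrandDeriv h z₀ z t = h z := by
  have hmem : ∀ t ∈ uIcc (0:ℝ) 1, z₀ + t • (z - z₀) ∈ U := fun t ht =>
    hUc.add_smul_sub_mem hz₀ hz (by rwa [uIcc_of_le zero_le_one] at ht)
  have hderiv : ∀ t ∈ uIcc (0:ℝ) 1,
      HasDerivAt (fun s : ℝ => s • h (z₀ + s • (z - z₀))) (segmentIntegrandDeriv h z₀ z t) t := by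
    intro t ht
    have hh' := (hh.differentiableAt (hU.mem_nhds (hmem t ht))).hasDerivAt
    have hline : HasDerivAt (fun s : ℝ => z₀ + s • (z - z₀)) ((1:ℝ) • (z - z₀)) t :=
      ((hasDerivAt_id t).smul_const (z - z₀)).const_add z₀
    refine ((hasDerivAt_id t).smul (hh'.comp t hline)).congr_deriv ?_
    simp only [segmentIntegrandDeriv, one_smul, id_eq, Function.comp_apply]
  have hcont : ContinuousOn (segmentIntegrandDeriv h z₀ z) (uIcc 0 1) :=
    (continuousOn_segmentIntegrandDeriv hh hU).comp (Continuous.prodMk_right z).continuousOn hmem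
  have hint : IntervalIntegrable (segmentIntegrandDeriv h z₀ z) volume 0 1 :=
    hcont.intervalIntegrable
  rw [intervalIntegral.integral_eq_sub_of_hasDerivAt hderiv hint]
  simp

lemma hasDerivAt_segmentPrimitive (hh : DifferentiableOn ℂ h U) (hU : IsOpen U)
    (hUc : Convex ℝ U) (hz₀ : z₀ ∈ U) (hz : z ∈ U) :
    HasDerivAt (segmentPrimitive h z₀) (h z) z := by
  obtain ⟨δ, hδ, hball⟩ := nhds_basis_closedBall.mem_iff.mp (hU.mem_nhds hz)
  have hmem : ∀ p ∈ closedBall z δ ×ˢ Icc (0:ℝ) 1, z₀ + p.2 • (p.1 - z₀) ∈ U :=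
    fun p hp => hUc.add_smul_sub_mem hz₀ (hball hp.1) hp.2
  have hF' := continuousOn_segmentIntegrandDeriv (z₀ := z₀) hh hU
  obtain ⟨C, hC⟩ :=
    ((isCompact_closedBall z δ).prod isCompact_Icc).exists_bound_of_continuousOn (hF'.mono hmem)
  have hIoc : uIoc (0:ℝ) 1 ⊆ Icc 0 1 := by
    rw [uIoc_of_le zero_le_one]; exact Ioc_subset_Icc_self
  have hz' : z ∈ closedBall z δ := mem_closedBall_self hδ.le
  have hF : ∀ w ∈ closedBall z δ,
      ContinuousOn (fun t : ℝ => h (z₀ + t • (w - z₀)) * (w - z₀)) (Icc 0 1) := fun w hw =>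
    (hh.continuousOn.comp (by fun_prop) fun t ht => hmem (w, t) ⟨hw, ht⟩).mul continuousOn_const
  have hF'z : ContinuousOn (segmentIntegrandDeriv h z₀ z) (Icc 0 1) :=
    hF'.comp (Continuous.prodMk_right z).continuousOn fun t ht => hmem (z, t) ⟨hz', ht⟩
  have key := intervalIntegral.hasDerivAt_integral_of_dominated_loc_of_deriv_le
    (μ := volume) (bound := fun _ => C) (ball_mem_nhds z hδ)
    (eventually_of_mem (closedBall_mem_nhds z hδ) fun w hw =>
      ((hF w hw).mono hIoc).aestronglyMeasurable measurableSet_uIoc)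
    ((hF z hz').intervalIntegrable_of_Icc zero_le_one)
    ((hF'z.mono hIoc).aestronglyMeasurable measurableSet_uIoc)
    (ae_of_all _ fun t ht w hw => hC (w, t) ⟨ball_subset_closedBall hw, hIoc ht⟩)
    intervalIntegrable_const
    (ae_of_all _ fun t ht w hw =>
      hasDerivAt_segmentIntegrand hh hU (hmem (w, t) ⟨ball_subset_closedBall hw, hIoc ht⟩))
  rw [← integral_segmentIntegrandDeriv hh hU hUc hz₀ hz]
  exact key.2

end SegmentPrimitive

lemma isOpen_UH : IsOpen UH := isOpen_lt continuous_const continuous_im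

lemma convex_UH : Convex ℝ UH := convex_halfSpace_im_gt 0

section TestFunction

variable {w z : ℂ}

lemma im_add_im_le_norm_sub_conj (w z : ℂ) : z.im + w.im ≤ ‖z - conj w‖ := by
  simpa using im_le_norm (z - conj w)

lemma sub_conj_ne_zero (hw : 0 < w.im) (hz : 0 < z.im) : z - conj w ≠ 0 := fun h0 => by
  have := im_add_im_le_norm_sub_conj w z
  rw [h0, norm_zero] at this
  linarith

lemma rpow_three_halves_eq_mul_sqrt {y : ℝ} (hy : 0 ≤ y) : y ^ (3 / 2 : ℝ) = y * √y := by
  rw [Real.sqrt_eq_rpow, ← Real.rpow_one_add' hy (by norm_num)]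
  norm_num

lemma norm_fw (hw : 0 < w.im) (z : ℂ) :
    ‖fw w z‖ = w.im ^ (3 / 2 : ℝ) / (√π * ‖z - conj w‖ ^ 2) := by
  rw [fw, norm_div, norm_mul, norm_pow, norm_real, norm_real,
    Real.norm_of_nonneg (by positivity), Real.norm_of_nonneg (Real.sqrt_nonneg _)]

lemma norm_fw_le (hw : 0 < w.im) (hz : 0 < z.im) :
    ‖fw w z‖ ≤ w.im ^ (3 / 2 : ℝ) / (√π * z.im ^ 2) := by
  rw [norm_fw hw]
  have := im_add_im_le_norm_sub_conj w z
  gcongr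
  linarith

lemma hasDerivAt_fw (hw : 0 < w.im) (hz : 0 < z.im) :
    HasDerivAt (fw w)
      (-(2 * ((w.im ^ (3 / 2 : ℝ) : ℝ) : ℂ)) / ((√π : ℂ) * (z - conj w) ^ 3)) z := by
  have hπ : (√π : ℂ) ≠ 0 := ofReal_ne_zero.mpr (Real.sqrt_pos.mpr Real.pi_pos).ne'
  have hne := sub_conj_ne_zero hw hz
  have hden : HasDerivAt (fun z => (√π : ℂ) * (z - conj w) ^ 2) (√π * (2 * (z - conj w))) z := by
    simpa using (((hasDerivAt_id z).sub_const (conj w)).pow 2).const_mul (√π : ℂ)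
  refine ((hden.inv (mul_ne_zero hπ (pow_ne_zero 2 hne))).const_mul
    ((w.im ^ (3 / 2 : ℝ) : ℝ) : ℂ)).congr_deriv ?_
  field_simp

lemma differentiableOn_fw (hw : 0 < w.im) : DifferentiableOn ℂ (fw w) UH :=
  fun _ hz => (hasDerivAt_fw hw hz).differentiableAt.differentiableWithinAt

lemma norm_deriv_fw (hw : 0 < w.im) (hz : 0 < z.im) :
    ‖deriv (fw w) z‖ = 2 * w.im ^ (3 / 2 : ℝ) / (√π * ‖z - conj w‖ ^ 3) := by
  rw [(hasDerivAt_fw hw hz).deriv, norm_div, norm_neg, norm_mul, norm_mul, norm_pow, norm_real,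
    norm_real, Real.norm_of_nonneg (by positivity), Real.norm_of_nonneg (Real.sqrt_nonneg _)]
  norm_num

lemma im_mul_norm_deriv_fw_le (hw : 0 < w.im) (hz : 0 < z.im) :
    z.im * ‖deriv (fw w) z‖ ≤ 2 / (√π * √w.im) := by
  rw [norm_deriv_fw hw hz, rpow_three_halves_eq_mul_sqrt hw.le]
  have hN := im_add_im_le_norm_sub_conj w z
  have hN0 : 0 < ‖z - conj w‖ := by linarith
  calc z.im * (2 * (w.im * √w.im) / (√π * ‖z - conj w‖ ^ 3))
      ≤ ‖z - conj w‖ * (2 * (w.im * √w.im) / (√π * ‖z - conj w‖ ^ 3)) := by gcongr; linarith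
    _ = 2 * (w.im * √w.im) / (√π * ‖z - conj w‖ ^ 2) := by field_simp
    _ ≤ 2 * (w.im * √w.im) / (√π * w.im ^ 2) := by gcongr; linarith
    _ = 2 / (√π * √w.im) := by
        field_simp
        rw [Real.sq_sqrt hw.le]

lemma im_mul_norm_deriv_fw_self (hw : 0 < w.im) :
    w.im * ‖deriv (fw w) w‖ = 1 / (4 * √π * √w.im) := by
  have hnorm : ‖w - conj w‖ = 2 * w.im := by
    rw [sub_conj, norm_mul, norm_real, norm_I, Real.norm_of_nonneg (by positivity), mul_one]
  rw [norm_deriv_fw hw hw, hnorm, rpow_three_halves_eq_mul_sqrt hw.le]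
  field_simp
  rw [Real.sq_sqrt hw.le]
  ring

end TestFunction

section HardyNorm

open ProbabilityTheory

variable {w : ℂ}

lemma sq_norm_sub_conj (w : ℂ) (x y : ℝ) :
    ‖(x + y * I : ℂ) - conj w‖ ^ 2 = (x - w.re) ^ 2 + (y + w.im) ^ 2 := by
  rw [Complex.sq_norm, normSq_apply]
  simp only [sub_re, add_re, ofReal_re, mul_re, I_re, mul_zero, ofReal_im, I_im, mul_one,
    sub_self, add_zero, conj_re, sub_im, add_im, mul_im, zero_add, conj_im, sub_neg_eq_add]
  ring

lemma sq_norm_fw_le_cauchyPDFReal (hw : 0 < w.im) {y : ℝ} (hy : 0 ≤ y) (x : ℝ) :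
    ‖fw w (x + y * I)‖ ^ 2 ≤
      (w.im / (y + w.im)) ^ 3 * cauchyPDFReal w.re (y + w.im).toNNReal x := by
  set b := y + w.im
  have hb : 0 < b := by positivity
  set s := (x - w.re) ^ 2 + b ^ 2
  have hbs : b ^ 2 ≤ s := le_add_of_nonneg_left (sq_nonneg _)
  have hw3 : (w.im ^ (3 / 2 : ℝ)) ^ 2 = w.im ^ 3 := by
    rw [rpow_three_halves_eq_mul_sqrt hw.le, mul_pow, Real.sq_sqrt hw.le]
    ring
  rw [norm_fw hw, div_pow, mul_pow, sq_norm_sub_conj, Real.sq_sqrt Real.pi_pos.le, hw3,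
    cauchyPDFReal_def, Real.coe_toNNReal _ hb.le]
  calc w.im ^ 3 / (π * s ^ 2) ≤ w.im ^ 3 / (π * (b ^ 2 * s)) := by
        gcongr
        nlinarith
    _ = (w.im / b) ^ 3 * (π⁻¹ * b * s⁻¹) := by
        field_simp

lemma hardySq_fw_le_one (hw : 0 < w.im) {y : ℝ} (hy : 0 ≤ y) : hardySq (fw w) y ≤ 1 := by
  have hb : 0 < y + w.im := by positivity
  calc hardySq (fw w) y
      ≤ ∫ x, (w.im / (y + w.im)) ^ 3 * cauchyPDFReal w.re (y + w.im).toNNReal x :=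
        integral_mono_of_nonneg (ae_of_all _ fun _ => by positivity)
          ((integrable_cauchyPDFReal _).const_mul _)
          (ae_of_all _ (sq_norm_fw_le_cauchyPDFReal hw hy))
    _ = (w.im / (y + w.im)) ^ 3 := by
        rw [integral_const_mul, integral_cauchyPDFReal_eq_one _ (by simpa using hb), mul_one]
    _ ≤ 1 := pow_le_one₀ (by positivity) ((div_le_one hb).mpr (by linarith))

lemma memH2_fw (hw : 0 < w.im) : MemH2 (fw w) :=
  ⟨differentiableOn_fw hw, 1, by
    rintro _ ⟨y, rfl⟩
    exact hardySq_fw_le_one hw (le_of_lt y.2)⟩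

lemma hardyNorm_fw_le_one (hw : 0 < w.im) : hardyNorm (fw w) ≤ 1 := by
  have : Nonempty (Ioi (0:ℝ)) := ⟨⟨1, mem_Ioi.mpr one_pos⟩⟩
  rw [hardyNorm, Real.sqrt_le_one]
  exact ciSup_le fun y => hardySq_fw_le_one hw (le_of_lt y.2)

end HardyNorm

lemma tendstoUniformlyOn_fw {ι : Type*} {l : Filter ι} {w : ι → ℂ} (hw : ∀ i, 0 < (w i).im)
    (him : Tendsto (fun i => (w i).im) l (nhds 0)) {K : Set ℂ} (hK : K ⊆ UH)
    (hKc : IsCompact K) : TendstoUniformlyOn (fun i => fw (w i)) 0 l K := by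
  rcases K.eq_empty_or_nonempty with rfl | hne
  · exact tendstoUniformlyOn_empty
  obtain ⟨z₁, hz₁, hmin⟩ := hKc.exists_isMinOn hne continuous_im.continuousOn
  have hc : Tendsto (fun i => (w i).im ^ (3 / 2 : ℝ) / (√π * z₁.im ^ 2)) l (nhds 0) := by
    simpa using (him.rpow_const (p := 3 / 2) (Or.inr (by norm_num))).div_const (√π * z₁.im ^ 2)
  rw [Metric.tendstoUniformlyOn_iff]
  intro ε hε
  filter_upwards [hc.eventually (gt_mem_nhds hε)] with i hi z hz
  rw [Pi.zero_apply, dist_zero_left]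
  calc ‖fw (w i) z‖ ≤ (w i).im ^ (3 / 2 : ℝ) / (√π * z.im ^ 2) := norm_fw_le (hw i) (hK hz)
    _ ≤ (w i).im ^ (3 / 2 : ℝ) / (√π * z₁.im ^ 2) := by
        have := hw i
        have : 0 < z₁.im := hK hz₁
        gcongr
        exact hmin hz
    _ < ε := hi

section Bloch

variable {g f : ℂ → ℂ} {z₀ w : ℂ}

lemma deriv_Ig (hg : DifferentiableOn ℂ g UH) (hf : DifferentiableOn ℂ f UH) (hz₀ : z₀ ∈ UH)
    {z : ℂ} (hz : z ∈ UH) : deriv (fun z => Ig g f z₀ z) z = deriv f z * g z :=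
  (hasDerivAt_segmentPrimitive (h := fun ζ => deriv f ζ * g ζ) ((hf.deriv isOpen_UH).mul hg)
    isOpen_UH convex_UH hz₀ hz).deriv

lemma le_blochNorm_Ig_fw (hg : DifferentiableOn ℂ g UH) (hgb : ∃ M : ℝ, ∀ z ∈ UH, ‖g z‖ ≤ M)
    (hz₀ : z₀ ∈ UH) (hw : w ∈ UH) :
    ‖g w‖ / √w.im / (4 * √π) ≤ blochNorm (fun z => Ig g (fw w) z₀ z) := by
  obtain ⟨M, hM⟩ := hgb
  have hderiv : ∀ z ∈ UH, deriv (fun z => Ig g (fw w) z₀ z) z = deriv (fw w) z * g z :=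
    fun z hz => deriv_Ig hg (differentiableOn_fw hw) hz₀ hz
  have hbdd : BddAbove
      (range fun z : UH => (z : ℂ).im * ‖deriv (fun z => Ig g (fw w) z₀ z) z‖) := by
    refine ⟨2 / (√π * √w.im) * M, ?_⟩
    rintro _ ⟨⟨z, hz⟩, rfl⟩
    dsimp only
    rw [hderiv z hz, norm_mul, ← mul_assoc]
    exact mul_le_mul (im_mul_norm_deriv_fw_le hw hz) (hM z hz) (norm_nonneg _) (by positivity)
  calc ‖g w‖ / √w.im / (4 * √π) = w.im * ‖deriv (fun z => Ig g (fw w) z₀ z) w‖ := by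
        rw [hderiv w hw, norm_mul, ← mul_assoc, im_mul_norm_deriv_fw_self hw]
        ring
    _ ≤ blochSemi (fun z => Ig g (fw w) z₀ z) := le_ciSup hbdd ⟨w, hw⟩
    _ ≤ blochNorm (fun z => Ig g (fw w) z₀ z) := le_add_of_nonneg_left (norm_nonneg _)

end Bloch

theorem stmt11 (g : ℂ → ℂ) (hg : DifferentiableOn ℂ g UH)
    (hgb : ∃ M : ℝ, ∀ z ∈ UH, ‖g z‖ ≤ M)
    (z₀ : ℂ) (hz₀ : z₀ ∈ UH)
    (hcpt : ∀ F : ℕ → ℂ → ℂ, (∀ n, MemH2 (F n)) →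
      (∃ M : ℝ, ∀ n, hardyNorm (F n) ≤ M) →
      (∀ K : Set ℂ, K ⊆ UH → IsCompact K → TendstoUniformlyOn F 0 atTop K) →
      Tendsto (fun n => blochNorm (fun z => Ig g (F n) z₀ z)) atTop (nhds 0)) :
    ∀ ε > 0, ∃ r > 0, ∀ z ∈ UH, z.im < r →
      ‖g z‖ / z.im ^ ((1:ℝ)/2) < ε := by
  intro ε hε
  by_contra! hcon
  choose w hwUH hwim hwlow using fun n : ℕ => hcon (1 / (n + 1)) Nat.one_div_pos_of_nat
  have him : Tendsto (fun n => (w n).im) atTop (nhds 0) :=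
    squeeze_zero (fun n => (hwUH n).le) (fun n => (hwim n).le)
      tendsto_one_div_add_atTop_nhds_zero_nat
  have hlim := hcpt (fun n => fw (w n)) (fun n => memH2_fw (hwUH n))
    ⟨1, fun n => hardyNorm_fw_le_one (hwUH n)⟩ fun K hK hKc => tendstoUniformlyOn_fw hwUH him hK hKc
  have hlow (n : ℕ) : ε / (4 * √π) ≤ blochNorm (fun z => Ig g (fw (w n)) z₀ z) := by
    have h := le_blochNorm_Ig_fw hg hgb hz₀ (hwUH n)
    rw [Real.sqrt_eq_rpow] at h
    exact le_trans (by gcongr; exact hwlow n) h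
  have : 0 < ε / (4 * √π) := by positivity
  linarith [ge_of_tendsto' hlim hlow]
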